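/- For any triangulation T of a convex m-gon (m ≥ 4), the map χ_T from 4-tuples of vertices to {−1, 0, +1} is a well-defined map: for each cyclically ordered 4-subset {a ≺ b ≺ c ≺ d}, exactly one of the two defining cases holds, so χ_T(a,b,c,d) is uniquely determined and nonzero. -/
import Mathlib


namespace CyclicTri

variable {m : ℕ}

/-- Position of `v` relative to base point `a` in the cyclic order on `ZMod m`. -/
def pos (a v : ZMod m) : ℕ := (v - a).val

/-- `a ≺ b ≺ c` in the cyclic order. -/
def Cyc3 (a b c : ZMod m) : Prop := 0 < pos a b ∧ pos a b < pos a c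

/-- `a ≺ b ≺ c ≺ d` in the cyclic order. -/
def Cyc4 (a b c d : ZMod m) : Prop :=
  0 < pos a b ∧ pos a b < pos a c ∧ pos a c < pos a d

/-- The arcs `xy` and `x'y'` cross: their endpoints interleave cyclically. -/
def Cross (x y x' y' : ZMod m) : Prop := Cyc4 x x' y y' ∨ Cyc4 x' x y' y

/-- `xy` is a diagonal of the polygon: the endpoints are distinct and non-adjacent. -/
def Diag (x y : ZMod m) : Prop := x ≠ y ∧ y ≠ x + 1 ∧ x ≠ y + 1

/-- `A` is (the symmetrised set of arcs of) a triangulation of the convex `m`-gon: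
a maximal set of pairwise non-crossing diagonals. -/
def IsTriangulation (A : Set (ZMod m × ZMod m)) : Prop :=
  (∀ x y, (x, y) ∈ A → (y, x) ∈ A) ∧
  (∀ x y, (x, y) ∈ A → Diag x y) ∧
  (∀ x y x' y', (x, y) ∈ A → (x', y') ∈ A → ¬ Cross x y x' y') ∧
  (∀ x y, Diag x y → (∀ x' y', (x', y') ∈ A → ¬ Cross x y x' y') → (x, y) ∈ A)

/-- There is an arc `xy` of `A` with `a ≺ b ≼ x ≺ c ≺ d ≼ y` (the `+1` case of `χ_T`). -/
def PosCase (A : Set (ZMod m × ZMod m)) (a b c d : ZMod m) : Prop :=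
  ∃ x y, (x, y) ∈ A ∧ 0 < pos a b ∧ pos a b ≤ pos a x ∧ pos a x < pos a c ∧
    pos a c < pos a d ∧ pos a d ≤ pos a y

/-- There is an arc `xy` of `A` with `a ≼ x ≺ b ≺ c ≼ y ≺ d` (the `-1` case of `χ_T`). -/
def NegCase (A : Set (ZMod m × ZMod m)) (a b c d : ZMod m) : Prop :=
  ∃ x y, (x, y) ∈ A ∧ pos a x < pos a b ∧ pos a b < pos a c ∧ pos a c ≤ pos a y ∧
    pos a y < pos a d

open Classical in
/-- The chirotope `χ_T` on cyclically ordered tuples `a ≺ b ≺ c ≺ d`. -/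
noncomputable def chiCyc (A : Set (ZMod m × ZMod m)) (a b c d : ZMod m) : ℤ :=
  if PosCase A a b c d then 1 else if NegCase A a b c d then -1 else 0

end CyclicTri

namespace CyclicTri

variable {m : ℕ}

lemma pos_lt [NeZero m] (a v : ZMod m) : pos a v < m := ZMod.val_lt _

lemma pos_self [NeZero m] (w : ZMod m) : pos w w = 0 := by
  simp [pos]

lemma pos_spec [NeZero m] (a u v : ZMod m) :
    (pos a u ≤ pos a v ∧ pos u v = pos a v - pos a u) ∨
    (pos a v < pos a u ∧ pos u v = pos a v + m - pos a u) := by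
  have h1 : (v - a) = (v - u) + (u - a) := by ring
  have h2 : pos a v = (pos u v + pos a u) % m := by
    show (v - a).val = _
    rw [h1, ZMod.val_add]; rfl
  have l1 : pos a v < m := pos_lt a v
  have l2 : pos a u < m := pos_lt a u
  have l3 : pos u v < m := pos_lt u v
  rcases lt_or_ge (pos u v + pos a u) m with hlt | hge
  · rw [Nat.mod_eq_of_lt hlt] at h2; omega
  · rw [Nat.mod_eq_sub_mod hge, Nat.mod_eq_of_lt (by omega)] at h2; omega

lemma pos_succ (hm : 1 < m) (a w : ZMod m) : pos a (w + 1) = (pos a w + 1) % m := by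
  haveI : NeZero m := ⟨by omega⟩
  haveI : Fact (1 < m) := ⟨hm⟩
  show (w + 1 - a).val = _
  have h : w + 1 - a = (w - a) + 1 := by ring
  rw [h, ZMod.val_add, ZMod.val_one]
  rfl

lemma diag_of (hm : 1 < m) (a u v : ZMod m) (h1 : 0 < pos a u)
    (h2 : pos a u + 2 ≤ pos a v) : Diag u v := by
  haveI : NeZero m := ⟨by omega⟩
  have lu := pos_lt a u
  have lv := pos_lt a v
  refine ⟨?_, ?_, ?_⟩
  · rintro rfl; omega
  · intro e
    have hs := pos_succ hm a u
    rw [← e] at hs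
    rcases lt_or_ge (pos a u + 1) m with hlt | hge
    · rw [Nat.mod_eq_of_lt hlt] at hs; omega
    · rw [Nat.mod_eq_sub_mod hge, Nat.mod_eq_of_lt (by omega)] at hs; omega
  · intro e
    have hs := pos_succ hm a v
    rw [← e] at hs
    rcases lt_or_ge (pos a v + 1) m with hlt | hge
    · rw [Nat.mod_eq_of_lt hlt] at hs; omega
    · rw [Nat.mod_eq_sub_mod hge, Nat.mod_eq_of_lt (by omega)] at hs; omega

lemma cyc4_char [NeZero m] (a : ZMod m) {u v : ZMod m} (p q : ZMod m)
    (h : pos a u < pos a v) :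
    Cyc4 u p v q ↔ (pos a u < pos a p ∧ pos a p < pos a v ∧
      (pos a q < pos a u ∨ pos a v < pos a q)) := by
  have s1 := pos_spec a u p
  have s2 := pos_spec a u v
  have s3 := pos_spec a u q
  have l1 := pos_lt a u; have l2 := pos_lt a v
  have l3 := pos_lt a p; have l4 := pos_lt a q
  have l5 := pos_lt u p; have l6 := pos_lt u v; have l7 := pos_lt u q
  unfold Cyc4
  omega

lemma cyc4_rot [NeZero m] {w x y z : ZMod m} (h : Cyc4 w x y z) : Cyc4 x y z w := by
  have s1 := pos_spec w x y
  have s2 := pos_spec w x z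
  have s3 := pos_spec w x w
  have h0 := pos_self (m := m) w
  have l1 := pos_lt w x; have l2 := pos_lt w y; have l3 := pos_lt w z
  have l4 := pos_lt x y; have l5 := pos_lt x z; have l6 := pos_lt x w
  unfold Cyc4 at h ⊢
  omega

lemma cross_char [NeZero m] (a : ZMod m) {u v p q : ZMod m}
    (h : pos a u < pos a v) :
    Cross u v p q ↔ ((pos a u < pos a p ∧ pos a p < pos a v ∧
        (pos a q < pos a u ∨ pos a v < pos a q)) ∨
      (pos a u < pos a q ∧ pos a q < pos a v ∧
        (pos a p < pos a u ∨ pos a v < pos a p))) := by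
  have hrot : Cyc4 p u q v ↔ Cyc4 u q v p :=
    ⟨cyc4_rot, fun hh => cyc4_rot (cyc4_rot (cyc4_rot hh))⟩
  unfold Cross
  rw [cyc4_char a p q h, hrot, cyc4_char a q p h]

lemma cyc4_of_lt [NeZero m] (a : ZMod m) {w x y z : ZMod m}
    (h1 : pos a w < pos a x) (h2 : pos a x < pos a y) (h3 : pos a y < pos a z) :
    Cyc4 w x y z := by
  have s1 := pos_spec a w x
  have s2 := pos_spec a w y
  have s3 := pos_spec a w z
  have l := pos_lt a z
  unfold Cyc4
  omega

lemma exists_case (hm : 1 < m) (A : Set (ZMod m × ZMod m)) (hT : IsTriangulation A)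
    (a b c d : ZMod m) (h : Cyc4 a b c d) :
    PosCase A a b c d ∨ NegCase A a b c d := by
  haveI : NeZero m := ⟨by omega⟩
  unfold Cyc4 at h
  obtain ⟨hb, hbc, hcd⟩ := h
  by_contra hcon
  rw [not_or] at hcon
  obtain ⟨hnp, hnn⟩ := hcon
  classical
  set S : ZMod m → ZMod m → Finset (ZMod m × ZMod m) :=
    fun u v => Finset.univ.filter (fun pq => pq ∈ A ∧ Cross u v pq.1 pq.2) with hS
  have hmemS : ∀ u v p q : ZMod m, (p, q) ∈ S u v ↔ ((p, q) ∈ A ∧ Cross u v p q) := by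
    intro u v p q; simp [hS]
  have hex : ∃ n : ℕ, ∃ u v : ZMod m,
      (pos a b ≤ pos a u ∧ pos a u < pos a c ∧ pos a d ≤ pos a v) ∧ (S u v).card = n :=
    ⟨_, b, d, ⟨le_refl _, hbc, le_refl _⟩, rfl⟩
  obtain ⟨u, v, ⟨hbu, huc, hdv⟩, hcard⟩ := Nat.find_spec hex
  have hmin : ∀ u' v' : ZMod m,
      (pos a b ≤ pos a u' ∧ pos a u' < pos a c ∧ pos a d ≤ pos a v') →
      (S u v).card ≤ (S u' v').card := by
    intro u' v' hG
    rw [hcard]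
    exact Nat.find_min' hex ⟨u', v', hG, rfl⟩
  have lb := pos_lt a b; have lc := pos_lt a c; have ld := pos_lt a d
  have lu := pos_lt a u; have lv := pos_lt a v
  have huv : pos a u < pos a v := by omega
  rcases Finset.eq_empty_or_nonempty (S u v) with hemp | ⟨⟨p, q⟩, hpq⟩
  · have hdiag : Diag u v := diag_of hm a u v (by omega) (by omega)
    have hA : (u, v) ∈ A := by
      refine hT.2.2.2 u v hdiag ?_
      intro x' y' hx' hcr
      have hmem : (x', y') ∈ S u v := (hmemS u v x' y').mpr ⟨hx', hcr⟩
      rw [hemp] at hmem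
      exact absurd hmem (Finset.notMem_empty _)
    exact hnp ⟨u, v, hA, hb, hbu, huc, hcd, hdv⟩
  · obtain ⟨hApq, hcr⟩ := (hmemS u v p q).mp hpq
    rw [cross_char a huv] at hcr
    obtain ⟨x, y, hAxy, hux, hxv, hy⟩ :
        ∃ x y, (x, y) ∈ A ∧ pos a u < pos a x ∧ pos a x < pos a v ∧
          (pos a y < pos a u ∨ pos a v < pos a y) := by
      rcases hcr with ⟨h1, h2, h3⟩ | ⟨h1, h2, h3⟩
      · exact ⟨p, q, hApq, h1, h2, h3⟩
      · exact ⟨q, p, hT.1 p q hApq, h1, h2, h3⟩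
    have lx := pos_lt a x; have ly := pos_lt a y
    have hAyx := hT.1 x y hAxy
    have step : ∀ u' v' : ZMod m,
        (pos a b ≤ pos a u' ∧ pos a u' < pos a c ∧ pos a d ≤ pos a v') →
        S u' v' ⊆ S u v → (x, y) ∉ S u' v' → False := by
      intro u' v' hG hsub hout
      have hin : (x, y) ∈ S u v := (hmemS u v x y).mpr ⟨hAxy, by
        rw [cross_char a huv]; exact Or.inl ⟨hux, hxv, hy⟩⟩
      have hlt : (S u' v').card < (S u v).card :=
        Finset.card_lt_card ((Finset.ssubset_iff_of_subset hsub).mpr ⟨(x, y), hin, hout⟩)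
      have := hmin u' v' hG
      omega
    by_cases hxc2 : pos a x < pos a c
    · rcases hy with hyu | hyv
      · -- move u → x
        refine step x v ⟨by omega, by omega, hdv⟩ ?_ ?_
        · rintro ⟨p', q'⟩ hp'
          rw [hmemS] at hp' ⊢
          obtain ⟨hA', hcr'⟩ := hp'
          refine ⟨hA', ?_⟩
          have hnc : ¬ Cross y x p' q' := hT.2.2.1 y x p' q' hAyx hA'
          rw [cross_char a (show pos a y < pos a x by omega)] at hnc
          rw [cross_char a (show pos a x < pos a v by omega)] at hcr'
          rw [cross_char a huv]
          have lp := pos_lt a p'; have lq := pos_lt a q'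
          omega
        · rw [hmemS]
          rintro ⟨-, hcr'⟩
          rw [cross_char a (show pos a x < pos a v by omega)] at hcr'
          omega
      · -- PosCase with (x, y)
        exact hnp ⟨x, y, hAxy, hb, by omega, by omega, hcd, by omega⟩
    · by_cases hxd : pos a x < pos a d
      · rcases hy with hyu | hyv
        · by_cases hyb : pos a y < pos a b
          · -- NegCase with (y, x)
            exact hnn ⟨y, x, hAyx, hyb, hbc, by omega, by omega⟩
          · -- move u → y
            refine step y v ⟨by omega, by omega, hdv⟩ ?_ ?_
            · rintro ⟨p', q'⟩ hp'
              rw [hmemS] at hp' ⊢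
              obtain ⟨hA', hcr'⟩ := hp'
              refine ⟨hA', ?_⟩
              have hnc : ¬ Cross y x p' q' := hT.2.2.1 y x p' q' hAyx hA'
              rw [cross_char a (show pos a y < pos a x by omega)] at hnc
              rw [cross_char a (show pos a y < pos a v by omega)] at hcr'
              rw [cross_char a huv]
              have lp := pos_lt a p'; have lq := pos_lt a q'
              omega
            · rw [hmemS]
              rintro ⟨-, hcr'⟩
              rw [cross_char a (show pos a y < pos a v by omega)] at hcr'
              omega
        · -- move v → y
          refine step u y ⟨hbu, huc, by omega⟩ ?_ ?_
          · rintro ⟨p', q'⟩ hp'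
            rw [hmemS] at hp' ⊢
            obtain ⟨hA', hcr'⟩ := hp'
            refine ⟨hA', ?_⟩
            have hnc : ¬ Cross x y p' q' := hT.2.2.1 x y p' q' hAxy hA'
            rw [cross_char a (show pos a x < pos a y by omega)] at hnc
            rw [cross_char a (show pos a u < pos a y by omega)] at hcr'
            rw [cross_char a huv]
            have lp := pos_lt a p'; have lq := pos_lt a q'
            omega
          · rw [hmemS]
            rintro ⟨-, hcr'⟩
            rw [cross_char a (show pos a u < pos a y by omega)] at hcr'
            omega
      · -- move v → x
        refine step u x ⟨hbu, huc, by omega⟩ ?_ ?_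
        · rintro ⟨p', q'⟩ hp'
          rw [hmemS] at hp' ⊢
          obtain ⟨hA', hcr'⟩ := hp'
          refine ⟨hA', ?_⟩
          rw [cross_char a (show pos a u < pos a x by omega)] at hcr'
          rw [cross_char a huv]
          have lp := pos_lt a p'; have lq := pos_lt a q'
          rcases hy with hyu | hyv
          · have hnc : ¬ Cross y x p' q' := hT.2.2.1 y x p' q' hAyx hA'
            rw [cross_char a (show pos a y < pos a x by omega)] at hnc
            omega
          · have hnc : ¬ Cross x y p' q' := hT.2.2.1 x y p' q' hAxy hA'
            rw [cross_char a (show pos a x < pos a y by omega)] at hnc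
            omega
        · rw [hmemS]
          rintro ⟨-, hcr'⟩
          rw [cross_char a (show pos a u < pos a x by omega)] at hcr'
          omega

end CyclicTri

open CyclicTri in
/-- `χ_T` is well defined: for each cyclically ordered 4-tuple exactly one of the
two defining cases holds, and `χ_T(a,b,c,d)` is nonzero. -/
theorem stmt_2 (m : ℕ) (hm : 4 ≤ m) (A : Set (ZMod m × ZMod m))
    (hT : IsTriangulation A) (a b c d : ZMod m) (h : Cyc4 a b c d) :
    Xor' (PosCase A a b c d) (NegCase A a b c d) ∧ chiCyc A a b c d ≠ 0 := by
  haveI : NeZero m := ⟨by omega⟩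
  have hkey := exists_case (by omega) A hT a b c d h
  have hnb : ¬(PosCase A a b c d ∧ NegCase A a b c d) := by
    rintro ⟨⟨x, y, hA1, h1, h2, h3, h4, h5⟩, ⟨x', y', hA2, h6, h7, h8, h9⟩⟩
    have hc4 : Cyc4 x' x y' y := cyc4_of_lt a (by omega) (by omega) (by omega)
    exact hT.2.2.1 x y x' y' hA1 hA2 (Or.inr hc4)
  refine ⟨?_, ?_⟩
  · rcases hkey with hp | hn
    · exact Or.inl ⟨hp, fun hn => hnb ⟨hp, hn⟩⟩
    · exact Or.inr ⟨hn, fun hp => hnb ⟨hp, hn⟩⟩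
  · rcases hkey with hp | hn
    · simp [chiCyc, hp]
    · have hnp : ¬ PosCase A a b c d := fun hp => hnb ⟨hp, hn⟩
      simp [chiCyc, hnp, hn]
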